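/- arXiv:2212.04253 — 5 statements merged into one kernel-verified Lean document; each statement's English description precedes it below -/
import Mathlib

section
/- For all m, n ≥ 0, the graph C_5(m,n) — obtained from a 5-cycle v₁v₂v₃v₄v₅ by adding m new vertices each adjacent exactly to v₁ and v₃, and n new vertices each adjacent exactly to v₁ and v₄ — is triangle-free, planar, and has diameter 2. -/
/-- `H` is a minor of `G`: there are nonempty, pairwise disjoint, connected
branch sets in `G`, one for each vertex of `H`, with an edge of `G` between
the branch sets of any two adjacent vertices of `H`. -/
def HasMinor {V W : Type*} (G : SimpleGraph V) (H : SimpleGraph W) : Prop :=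
  ∃ B : W → Set V,
    (∀ w, (B w).Nonempty) ∧
    (∀ w, ((G.induce (B w)).Connected)) ∧
    (Pairwise fun w₁ w₂ => Disjoint (B w₁) (B w₂)) ∧
    (∀ w₁ w₂, H.Adj w₁ w₂ → ∃ u ∈ B w₁, ∃ v ∈ B w₂, G.Adj u v)

/-- Planarity, via Wagner's forbidden-minor characterization. -/
def IsPlanar {V : Type*} (G : SimpleGraph V) : Prop :=
  ¬ HasMinor G (SimpleGraph.completeGraph (Fin 5)) ∧
  ¬ HasMinor G (completeBipartiteGraph (Fin 3) (Fin 3))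

/-- The graph `C₅(m,n)`: a 5-cycle `v₀v₁v₂v₃v₄` (so `v₁ = v 0`, ..., `v₅ = v 4`),
`m` extra vertices adjacent exactly to `v 0` and `v 2`, and `n` extra vertices
adjacent exactly to `v 0` and `v 3`. -/
def C5mn (m n : ℕ) : SimpleGraph (Fin 5 ⊕ (Fin m ⊕ Fin n)) :=
  SimpleGraph.fromRel (fun a b =>
    match a, b with
    | Sum.inl i, Sum.inl j => j = i + 1
    | Sum.inr (Sum.inl _), Sum.inl i => i = 0 ∨ i = 2
    | Sum.inr (Sum.inr _), Sum.inl i => i = 0 ∨ i = 3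
    | _, _ => False)

/-- `C₅(m,n)` is triangle-free, planar, and has diameter 2. -/
def tag {m n : ℕ} : Fin m ⊕ Fin n → Fin 5 := Sum.elim (fun _ => 2) (fun _ => 3)

variable {m n : ℕ}

lemma tag_eq (t : Fin m ⊕ Fin n) : tag t = 2 ∨ tag t = 3 := by cases t <;> simp [tag]

lemma adj_ll (i j : Fin 5) :
    (C5mn m n).Adj (Sum.inl i) (Sum.inl j) ↔ i ≠ j ∧ (j = i + 1 ∨ i = j + 1) := by
  simp [C5mn, SimpleGraph.fromRel_adj]

lemma adj_rl (t : Fin m ⊕ Fin n) (i : Fin 5) :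
    (C5mn m n).Adj (Sum.inr t) (Sum.inl i) ↔ i = 0 ∨ i = tag t := by
  cases t <;> simp [C5mn, SimpleGraph.fromRel_adj, tag]

lemma adj_lr (i : Fin 5) (t : Fin m ⊕ Fin n) :
    (C5mn m n).Adj (Sum.inl i) (Sum.inr t) ↔ i = 0 ∨ i = tag t := by
  rw [SimpleGraph.adj_comm]; exact adj_rl t i

lemma not_adj_rr (t t' : Fin m ⊕ Fin n) :
    ¬ (C5mn m n).Adj (Sum.inr t) (Sum.inr t') := by
  cases t <;> cases t' <;> simp [C5mn, SimpleGraph.fromRel_adj]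

/-- first step of connectivity -/
lemma step {V : Type*} {G : SimpleGraph V} {B : Set V}
    (hc : (G.induce B).Connected) {u v : V} (hu : u ∈ B) (hv : v ∈ B) (huv : u ≠ v) :
    ∃ y ∈ B, G.Adj u y := by
  obtain ⟨p⟩ := hc.preconnected ⟨u, hu⟩ ⟨v, hv⟩
  cases p with
  | nil => exact absurd rfl huv
  | cons h _ => exact ⟨_, (by exact Subtype.coe_prop _), h⟩


/-- if a branch set has no cycle vertex, it is a singleton extra vertex;
then three pairwise-disjoint neighboring sets each contain one of its two
neighbors: pigeonhole. -/
lemma hasInl {W : Type*} {B : W → Set (Fin 5 ⊕ (Fin m ⊕ Fin n))}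
    (hconn : ∀ w, ((C5mn m n).induce (B w)).Connected)
    (hdisj : Pairwise fun w₁ w₂ => Disjoint (B w₁) (B w₂))
    (hne : ∀ w, (B w).Nonempty)
    (w w₁ w₂ w₃ : W) (d12 : w₁ ≠ w₂) (d13 : w₁ ≠ w₃) (d23 : w₂ ≠ w₃)
    (hE : ∀ k ∈ ({w₁, w₂, w₃} : Set W), ∃ u ∈ B w, ∃ v ∈ B k, (C5mn m n).Adj u v) :
    ∃ i, Sum.inl i ∈ B w := by
  by_contra hno
  push_neg at hno
  -- every element of B w is inr
  have hinr : ∀ u ∈ B w, ∃ t, u = Sum.inr t := by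
    intro u hu
    cases u with
    | inl i => exact absurd hu (hno i)
    | inr t => exact ⟨t, rfl⟩
  obtain ⟨u, hu⟩ := hne w
  obtain ⟨t, rfl⟩ := hinr u hu
  -- B w is the singleton {inr t}
  have hsing : ∀ u' ∈ B w, u' = Sum.inr t := by
    intro u' hu'
    by_contra hne'
    obtain ⟨y, hy, hadjy⟩ := step (hconn w) hu' hu hne'
    obtain ⟨t', rfl⟩ := hinr u' hu'
    obtain ⟨t'', rfl⟩ := hinr y hy
    exact not_adj_rr t' t'' hadjy
  -- each neighboring branch set contains inl 0 or inl (tag t)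
  have key : ∀ k ∈ ({w₁, w₂, w₃} : Set W),
      Sum.inl (0 : Fin 5) ∈ B k ∨ Sum.inl (tag t) ∈ B k := by
    intro k hk
    obtain ⟨u', hu', v, hv, hadj⟩ := hE k hk
    rw [hsing u' hu'] at hadj
    cases v with
    | inl i =>
      rcases (adj_rl t i).1 hadj with h | h
      · exact Or.inl (h ▸ hv)
      · exact Or.inr (h ▸ hv)
    | inr t' => exact absurd hadj (not_adj_rr t t')
  -- pigeonhole among three disjoint sets and two vertices
  have nd : ∀ k₁ k₂, k₁ ∈ ({w₁, w₂, w₃} : Set W) → k₂ ∈ ({w₁, w₂, w₃} : Set W) →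
      k₁ ≠ k₂ → ((Sum.inl (0 : Fin 5) ∈ B k₁) ↔ (Sum.inl (0 : Fin 5) ∈ B k₂)) → False := by
    intro k₁ k₂ hk₁ hk₂ hkne hiff
    have hd := hdisj hkne
    by_cases h0 : Sum.inl (0 : Fin 5) ∈ B k₁
    · exact Set.disjoint_left.1 hd h0 (hiff.1 h0)
    · have h1 := (key k₁ hk₁).resolve_left h0
      have h2 := (key k₂ hk₂).resolve_left (fun h => h0 (hiff.2 h))
      exact Set.disjoint_left.1 hd h1 h2
  have tri : ∀ (p q r : Prop), (p ↔ q) ∨ (p ↔ r) ∨ (q ↔ r) := by tauto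
  rcases tri (Sum.inl (0:Fin 5) ∈ B w₁) (Sum.inl (0:Fin 5) ∈ B w₂) (Sum.inl (0:Fin 5) ∈ B w₃) with h | h | h
  · exact nd w₁ w₂ (by simp) (by simp) d12 h
  · exact nd w₁ w₃ (by simp) (by simp) d13 h
  · exact nd w₂ w₃ (by simp) (by simp) d23 h

lemma tag_ne_one (t : Fin m ⊕ Fin n) : tag t ≠ 1 := by
  rcases tag_eq t with h | h <;> simp [h]

theorem noK5 : ¬ HasMinor (C5mn m n) (SimpleGraph.completeGraph (Fin 5)) := by
  rintro ⟨B, hne, hconn, hdisj, hadj⟩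
  have dis : ∀ w : Fin 5, w+1 ≠ w+2 ∧ w+1 ≠ w+3 ∧ w+2 ≠ w+3 ∧ w ≠ w+1 ∧ w ≠ w+2 ∧ w ≠ w+3 := by
    decide
  have stepA : ∀ w : Fin 5, ∃ i, Sum.inl i ∈ B w := by
    intro w
    obtain ⟨d12, d13, d23, e1, e2, e3⟩ := dis w
    refine hasInl hconn hdisj hne w (w+1) (w+2) (w+3) d12 d13 d23 ?_
    intro k hk
    rcases hk with h | h | h
    · exact hadj w (w+1) (by simpa [SimpleGraph.completeGraph] using e1) |>.imp (fun u hu => h ▸ hu)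
    · exact hadj w (w+2) (by simpa [SimpleGraph.completeGraph] using e2) |>.imp (fun u hu => h ▸ hu)
    · exact hadj w (w+3) (by simpa [SimpleGraph.completeGraph] using e3) |>.imp (fun u hu => h ▸ hu)
  choose c hc using stepA
  have cinj : Function.Injective c := by
    intro w₁ w₂ h
    by_contra hne'
    exact Set.disjoint_left.1 (hdisj hne') (hc w₁) (h ▸ hc w₂)
  have csurj : Function.Surjective c := Finite.surjective_of_injective cinj
  have uniq : ∀ w i, Sum.inl i ∈ B w → i = c w := by
    intro w i hi
    obtain ⟨w', hw'⟩ := csurj i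
    by_cases h : w = w'
    · exact h ▸ hw'.symm
    · exact absurd (hw' ▸ hc w') (fun hm => Set.disjoint_left.1 (hdisj h) hi hm)
  obtain ⟨a, ha⟩ := csurj 1
  obtain ⟨b, hb⟩ := csurj 3
  have hab : a ≠ b := fun h => by rw [h, hb] at ha; exact absurd ha (by decide)
  obtain ⟨u, hu, v, hv, huv⟩ := hadj a b (by simpa [SimpleGraph.completeGraph] using hab)
  cases u with
  | inl i =>
    have hi : i = 1 := (uniq a i hu).trans ha
    cases v with
    | inl j =>
      have hj : j = 3 := (uniq b j hv).trans hb
      rw [hi, hj, adj_ll] at huv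
      revert huv; decide
    | inr t =>
      rw [hi, adj_lr] at huv
      rcases huv with h | h
      · exact absurd h (by decide)
      · exact tag_ne_one t h.symm
  | inr t =>
    have h1 : Sum.inl (1 : Fin 5) ∈ B a := ha ▸ hc a
    obtain ⟨y, hy, hady⟩ := step (hconn a) hu h1 (by simp)
    cases y with
    | inl i' =>
      have : i' = 1 := (uniq a i' hy).trans ha
      rw [this, adj_rl] at hady
      rcases hady with h | h
      · exact absurd h (by decide)
      · exact tag_ne_one t h.symm
    | inr t' => exact not_adj_rr t t' hady

theorem noK33 : ¬ HasMinor (C5mn m n) (completeBipartiteGraph (Fin 3) (Fin 3)) := by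
  rintro ⟨B, hne, hconn, hdisj, hadj⟩
  have stepA : ∀ w : Fin 3 ⊕ Fin 3, ∃ i, Sum.inl i ∈ B w := by
    intro w
    cases w with
    | inl p =>
      refine hasInl hconn hdisj hne (Sum.inl p) (Sum.inr 0) (Sum.inr 1) (Sum.inr 2)
        (by simp) (by simp) (by simp [Fin.ext_iff]) ?_
      rintro k (h | h | h) <;> subst h <;> exact hadj _ _ (by simp)
    | inr p =>
      refine hasInl hconn hdisj hne (Sum.inr p) (Sum.inl 0) (Sum.inl 1) (Sum.inl 2)
        (by simp) (by simp) (by simp [Fin.ext_iff]) ?_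
      rintro k (h | h | h) <;> subst h <;> exact hadj _ _ (by simp)
  choose c hc using stepA
  have cinj : Function.Injective c := by
    intro w₁ w₂ h
    by_contra hne'
    exact Set.disjoint_left.1 (hdisj hne') (hc w₁) (h ▸ hc w₂)
  have := Fintype.card_le_of_injective c cinj
  simp at this

lemma noTri (a b c : Fin 5 ⊕ (Fin m ⊕ Fin n)) (hab : (C5mn m n).Adj a b)
    (hac : (C5mn m n).Adj a c) (hbc : (C5mn m n).Adj b c) : False := by
  have A : ∀ i j k : Fin 5, (i ≠ j ∧ (j = i+1 ∨ i = j+1)) → (i ≠ k ∧ (k = i+1 ∨ i = k+1)) →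
      (j ≠ k ∧ (k = j+1 ∨ j = k+1)) → False := by decide
  have Bd : ∀ c i j : Fin 5, (c = 2 ∨ c = 3) → (i = 0 ∨ i = c) → (j = 0 ∨ j = c) →
      ¬(i ≠ j ∧ (j = i+1 ∨ i = j+1)) := by decide
  rcases a with i | t <;> rcases b with j | t' <;> rcases c with k | t''
  · rw [adj_ll] at hab hac hbc; exact A i j k hab hac hbc
  · rw [adj_ll] at hab; rw [adj_lr] at hac; rw [adj_lr] at hbc
    exact Bd (tag t'') i j (tag_eq t'') hac hbc hab
  · rw [adj_lr] at hab; rw [adj_ll] at hac; rw [adj_rl] at hbc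
    exact Bd (tag t') i k (tag_eq t') hab hbc hac
  · exact not_adj_rr t' t'' hbc
  · rw [adj_rl] at hab hac; rw [adj_ll] at hbc
    exact Bd (tag t) j k (tag_eq t) hab hac hbc
  · exact not_adj_rr t t'' hac
  · exact not_adj_rr t t' hab
  · exact not_adj_rr t t' hab

theorem cfree : (C5mn m n).CliqueFree 3 := by
  intro s hs
  obtain ⟨a, b, c, hab, hac, hbc, rfl⟩ := Finset.card_eq_three.mp hs.2
  have h := hs.1
  exact noTri a b c (h (by simp) (by simp) hab) (h (by simp) (by simp) hac)
    (h (by simp) (by simp) hbc)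

theorem diam2 : ∀ u v : Fin 5 ⊕ (Fin m ⊕ Fin n), u ≠ v →
    (C5mn m n).Adj u v ∨ ∃ w, (C5mn m n).Adj u w ∧ (C5mn m n).Adj w v := by
  have D1 : ∀ i j : Fin 5, i ≠ j → (i ≠ j ∧ (j = i+1 ∨ i = j+1)) ∨
      ∃ k, (i ≠ k ∧ (k = i+1 ∨ i = k+1)) ∧ (k ≠ j ∧ (j = k+1 ∨ k = j+1)) := by decide
  have D2 : ∀ c i : Fin 5, (c = 2 ∨ c = 3) → ¬(i = 0 ∨ i = c) →
      ∃ k, (i ≠ k ∧ (k = i+1 ∨ i = k+1)) ∧ (k = 0 ∨ k = c) := by decide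
  intro u v huv
  rcases u with i | t <;> rcases v with j | t'
  · have hij : i ≠ j := fun h => huv (by rw [h])
    rcases D1 i j hij with h | ⟨k, h1, h2⟩
    · exact Or.inl ((adj_ll i j).2 h)
    · exact Or.inr ⟨Sum.inl k, (adj_ll i k).2 h1, (adj_ll k j).2 h2⟩
  · by_cases h : i = 0 ∨ i = tag t'
    · exact Or.inl ((adj_lr i t').2 h)
    · obtain ⟨k, h1, h2⟩ := D2 (tag t') i (tag_eq t') h
      exact Or.inr ⟨Sum.inl k, (adj_ll i k).2 h1, (adj_lr k t').2 h2⟩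
  · by_cases h : j = 0 ∨ j = tag t
    · exact Or.inl ((C5mn m n).adj_symm ((adj_lr j t).2 h))
    · obtain ⟨k, h1, h2⟩ := D2 (tag t) j (tag_eq t) h
      exact Or.inr ⟨Sum.inl k, (adj_rl t k).2 h2, (adj_ll k j).2 ⟨h1.1.symm, h1.2.symm⟩⟩
  · exact Or.inr ⟨Sum.inl 0, (adj_rl t 0).2 (Or.inl rfl), (adj_lr 0 t').2 (Or.inl rfl)⟩

theorem stmt_3 (m n : ℕ) :
    (C5mn m n).CliqueFree 3 ∧ IsPlanar (C5mn m n) ∧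
    ∀ u v : Fin 5 ⊕ (Fin m ⊕ Fin n), u ≠ v →
      (C5mn m n).Adj u v ∨ ∃ w, (C5mn m n).Adj u w ∧ (C5mn m n).Adj w v :=
  ⟨cfree, ⟨noK5, noK33⟩, diam2⟩
end

section
/- The domination number of the Petersen graph is exactly 3. -/
/-- The Petersen graph: vertices are the 2-element subsets of a 5-element set,
adjacent iff disjoint. -/
def PetersenGraph : SimpleGraph {s : Finset (Fin 5) // s.card = 2} :=
  SimpleGraph.fromRel (fun a b => Disjoint a.1 b.1)

instance : DecidableRel PetersenGraph.Adj := fun a b =>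
  decidable_of_iff (a ≠ b ∧ (Disjoint a.1 b.1 ∨ Disjoint b.1 a.1)) Iff.rfl

abbrev PV := {s : Finset (Fin 5) // s.card = 2}

set_option maxRecDepth 10000 in
lemma card_univ_PV : (Finset.univ : Finset PV).card = 10 := by decide

set_option maxRecDepth 10000 in
lemma closed_nbhd_card (u : PV) :
    (insert u (PetersenGraph.neighborFinset u)).card ≤ 4 := by
  revert u; decide

set_option maxRecDepth 10000 in
lemma exists_dom : ∃ D : Finset PV, D.card = 3 ∧
    ∀ v, v ∈ D ∨ ∃ u ∈ D, PetersenGraph.Adj u v := by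
  refine ⟨{⟨{0,1}, rfl⟩, ⟨{0,2}, rfl⟩, ⟨{1,2}, rfl⟩}, by decide, ?_⟩
  decide

/-- The domination number of the Petersen graph is exactly 3. -/
theorem stmt_8 :
    (∃ D : Finset {s : Finset (Fin 5) // s.card = 2}, D.card = 3 ∧
      ∀ v, v ∈ D ∨ ∃ u ∈ D, PetersenGraph.Adj u v) ∧
    (∀ D : Finset {s : Finset (Fin 5) // s.card = 2},
      (∀ v, v ∈ D ∨ ∃ u ∈ D, PetersenGraph.Adj u v) → 3 ≤ D.card) := by
  refine ⟨exists_dom, ?_⟩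
  intro D hD
  have hsub : (Finset.univ : Finset PV) ⊆
      D.biUnion (fun u => insert u (PetersenGraph.neighborFinset u)) := by
    intro v _
    rcases hD v with hv | ⟨u, hu, hadj⟩
    · exact Finset.mem_biUnion.2 ⟨v, hv, Finset.mem_insert_self _ _⟩
    · exact Finset.mem_biUnion.2 ⟨u, hu,
        Finset.mem_insert_of_mem ((SimpleGraph.mem_neighborFinset _ _ _).2 hadj)⟩
  have h10 : 10 ≤ (D.biUnion (fun u => insert u (PetersenGraph.neighborFinset u))).card := by
    calc 10 = (Finset.univ : Finset PV).card := card_univ_PV.symm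
    _ ≤ _ := Finset.card_le_card hsub
  have hle : (D.biUnion (fun u => insert u (PetersenGraph.neighborFinset u))).card
      ≤ D.card * 4 := by
    calc _ ≤ ∑ u ∈ D, (insert u (PetersenGraph.neighborFinset u)).card :=
          Finset.card_biUnion_le
    _ ≤ ∑ _u ∈ D, 4 := Finset.sum_le_sum (fun u _ => closed_nbhd_card u)
    _ = D.card * 4 := by rw [Finset.sum_const, smul_eq_mul]
  omega
end

section
/- Let G be a triangle-free graph of diameter 2 and let v be a vertex of degree 2 with neighbors v₁, v₂. Define S₁ = N(v₁) \ (N(v₂) ∪ {v}) and S₂ = N(v₂) \ (N(v₁) ∪ {v}). Then every vertex of S₁ is adjacent to every vertex of S₂. -/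
/-- In a triangle-free graph of diameter 2, if `v` has degree 2
with neighbors `v₁, v₂`, then every vertex of
`S₁ = N(v₁) \ (N(v₂) ∪ {v})` is adjacent to every vertex of
`S₂ = N(v₂) \ (N(v₁) ∪ {v})`. -/
theorem stmt_10 {V : Type*} [Fintype V] (G : SimpleGraph V)
    (htf : G.CliqueFree 3)
    (hdiam : ∀ a b : V, a ≠ b → ¬ G.Adj a b → ∃ w, G.Adj a w ∧ G.Adj w b)
    (v v₁ v₂ : V) (hne : v₁ ≠ v₂)
    (hnbr : G.neighborSet v = {v₁, v₂}) :
    ∀ a ∈ G.neighborSet v₁ \ (G.neighborSet v₂ ∪ {v}),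
    ∀ b ∈ G.neighborSet v₂ \ (G.neighborSet v₁ ∪ {v}),
      G.Adj a b := by
  have ht : ∀ x y z : V, G.Adj x y → G.Adj x z → G.Adj y z → False := by
    intro x y z h1 h2 h3
    classical
    exact htf {x, y, z} (SimpleGraph.is3Clique_triple_iff.2 ⟨h1, h2, h3⟩)
  have hvmem : ∀ x, G.Adj v x ↔ x = v₁ ∨ x = v₂ := by
    intro x
    have := Set.ext_iff.1 hnbr x
    simpa [SimpleGraph.mem_neighborSet] using this
  have hv1 : G.Adj v v₁ := (hvmem v₁).2 (Or.inl rfl)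
  have hv2 : G.Adj v v₂ := (hvmem v₂).2 (Or.inr rfl)
  have h12 : ¬ G.Adj v₁ v₂ := fun h => ht v v₁ v₂ hv1 hv2 h
  intro a ha b hb
  simp only [Set.mem_diff, Set.mem_union, Set.mem_singleton_iff,
    SimpleGraph.mem_neighborSet] at ha hb
  have ha1 := ha.1
  have ha2 : ¬ G.Adj v₂ a := fun h => ha.2 (Or.inl h)
  have hb2 := hb.1
  have hb1 : ¬ G.Adj v₁ b := fun h => hb.2 (Or.inl h)
  by_contra hab
  have hne_ab : a ≠ b := by
    rintro rfl; exact ha2 hb2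
  obtain ⟨w, hwa, hwb⟩ := hdiam a b hne_ab hab
  have hw1 : w ≠ v₁ := by rintro rfl; exact hb1 hwb
  have hw2 : w ≠ v₂ := by rintro rfl; exact ha2 hwa.symm
  have hwv : w ≠ v := by
    rintro rfl
    rcases (hvmem a).1 hwa.symm with rfl | rfl
    · exact G.irrefl ha1
    · exact h12 ha1
  have hvw : ¬ G.Adj v w := fun h => by
    rcases (hvmem w).1 h with rfl | rfl
    · exact hw1 rfl
    · exact hw2 rfl
  obtain ⟨u, hvu, huw⟩ := hdiam v w (Ne.symm hwv) hvw
  rcases (hvmem u).1 hvu with h | h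
  · subst h; exact ht w u a huw.symm hwa.symm ha1
  · subst h; exact ht w u b huw.symm hwb hb2
end

section
/- If G is a triangle-free graph of diameter 2, v is a degree-2 vertex with neighbors v₁,v₂, and the sets S₁ = N(v₁)\(N(v₂)∪{v}) and S₂ = N(v₂)\(N(v₁)∪{v}) satisfy |S₁| ≥ 4 and |S₂| ≥ 2, then G contains K_{3,5} as a minor. -/
lemma peel {α : Type*} (s : Set α) (hfin : s.Finite) {n : ℕ} (h : n + 1 ≤ s.ncard) :
    ∃ a ∈ s, n ≤ (s \ {a}).ncard := by
  have hne : s.Nonempty := by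
    rcases s.eq_empty_or_nonempty with rfl | hne
    · simp [Set.ncard_empty] at h
    · exact hne
  obtain ⟨a, ha⟩ := hne
  refine ⟨a, ha, ?_⟩
  rw [Set.ncard_diff_singleton_of_mem ha]
  omega

lemma conn_single {V : Type*} (G : SimpleGraph V) (x : V) :
    (G.induce {x}).Connected := by
  haveI : Nonempty ({x} : Set V) := ⟨⟨x, rfl⟩⟩
  constructor
  intro a b
  have : a = b := Subtype.ext (a.2.trans b.2.symm)
  exact this ▸ SimpleGraph.Reachable.refl a

lemma conn_pair {V : Type*} {G : SimpleGraph V} {x y : V} (h : G.Adj x y) :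
    (G.induce {x, y}).Connected := by
  have hx : x ∈ ({x, y} : Set V) := Or.inl rfl
  have hy : y ∈ ({x, y} : Set V) := Or.inr rfl
  have hadj : (G.induce {x, y}).Adj ⟨x, hx⟩ ⟨y, hy⟩ := h
  haveI : Nonempty ({x, y} : Set V) := ⟨⟨x, hx⟩⟩
  constructor
  intro a b
  have key : ∀ c : ({x, y} : Set V), (G.induce {x, y}).Reachable ⟨x, hx⟩ c := by
    rintro ⟨c, hc | hc⟩
    · subst hc; exact SimpleGraph.Reachable.refl _
    · subst hc; exact hadj.reachable
  exact (key a).symm.trans (key b)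

/-- In a triangle-free graph of diameter 2 with a degree-2
vertex `v` with neighbors `v₁, v₂`, if `|S₁| ≥ 4` and `|S₂| ≥ 2` (where
`Sᵢ = N(vᵢ) \ (N(v₃₋ᵢ) ∪ {v})`), then `G` has a `K_{3,5}` minor. -/
theorem stmt_12 {V : Type*} [Fintype V] (G : SimpleGraph V)
    (htf : G.CliqueFree 3)
    (hdiam : ∀ a b : V, a ≠ b → ¬ G.Adj a b → ∃ w, G.Adj a w ∧ G.Adj w b)
    (v v₁ v₂ : V) (hne : v₁ ≠ v₂)
    (hnbr : G.neighborSet v = {v₁, v₂})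
    (hS1 : 4 ≤ (G.neighborSet v₁ \ (G.neighborSet v₂ ∪ {v})).ncard)
    (hS2 : 2 ≤ (G.neighborSet v₂ \ (G.neighborSet v₁ ∪ {v})).ncard) :
    HasMinor G (completeBipartiteGraph (Fin 3) (Fin 5)) := by
  have htri : ∀ a b c : V, G.Adj a b → G.Adj a c → G.Adj b c → False := fun a b c hab hac hbc =>
    haveI := Classical.decEq V
    htf {a, b, c} (SimpleGraph.is3Clique_triple_iff.mpr ⟨hab, hac, hbc⟩)
  have hvv₁ : G.Adj v v₁ := by
    have : v₁ ∈ G.neighborSet v := by rw [hnbr]; exact Or.inl rfl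
    exact this
  have hvv₂ : G.Adj v v₂ := by
    have : v₂ ∈ G.neighborSet v := by rw [hnbr]; exact Or.inr rfl
    exact this
  have h12 : ¬ G.Adj v₁ v₂ := fun h => htri v v₁ v₂ hvv₁ hvv₂ h
  have hnv : ∀ x, G.Adj v x → x = v₁ ∨ x = v₂ := by
    intro x hx
    have : x ∈ G.neighborSet v := hx
    rw [hnbr] at this
    exact this
  -- membership characterizations
  have hmem1 : ∀ a, a ∈ G.neighborSet v₁ \ (G.neighborSet v₂ ∪ {v}) →
      G.Adj v₁ a ∧ a ≠ v ∧ ¬ G.Adj v₂ a := by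
    intro a ha
    simpa using ha
  have hmem2 : ∀ b, b ∈ G.neighborSet v₂ \ (G.neighborSet v₁ ∪ {v}) →
      G.Adj v₂ b ∧ b ≠ v ∧ ¬ G.Adj v₁ b := by
    intro b hb
    simpa using hb
  -- the key adjacency
  have key : ∀ a b, a ∈ G.neighborSet v₁ \ (G.neighborSet v₂ ∪ {v}) →
      b ∈ G.neighborSet v₂ \ (G.neighborSet v₁ ∪ {v}) → G.Adj a b := by
    intro a b haS hbS
    obtain ⟨hv1a, hav, hnv2a⟩ := hmem1 a haS
    obtain ⟨hv2b, hbv, hnv1b⟩ := hmem2 b hbS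
    have hab : a ≠ b := fun h => hnv2a (h ▸ hv2b)
    by_contra hnadj
    obtain ⟨w, haw, hwb⟩ := hdiam a b hab hnadj
    have hwv : v ≠ w := by
      rintro rfl
      rcases hnv a haw.symm with h | h
      · exact G.irrefl (h ▸ hv1a)
      · exact h12 (h ▸ hv1a)
    have hnvw : ¬ G.Adj v w := by
      intro h
      rcases hnv w h with rfl | rfl
      · exact hnv1b hwb
      · exact hnv2a haw.symm
    obtain ⟨u, hvu, huw⟩ := hdiam v w hwv hnvw
    rcases hnv u hvu with h | h
    · exact htri v₁ w a (h ▸ huw) hv1a haw.symm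
    · exact htri v₂ w b (h ▸ huw) hv2b hwb
  -- extract distinct elements
  obtain ⟨a₁, ha₁, hc3⟩ := peel _ (Set.toFinite _) hS1
  obtain ⟨a₂, ha₂', hc2⟩ := peel _ (Set.toFinite _) hc3
  obtain ⟨a₃, ha₃', hc1⟩ := peel _ (Set.toFinite _) hc2
  obtain ⟨a₄, ha₄', -⟩ := peel _ (Set.toFinite _) hc1
  obtain ⟨b₁, hb₁, hd1⟩ := peel _ (Set.toFinite _) hS2
  obtain ⟨b₂, hb₂', -⟩ := peel _ (Set.toFinite _) hd1
  have na21 : a₂ ≠ a₁ := ha₂'.2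
  have na31 : a₃ ≠ a₁ := ha₃'.1.2
  have na32 : a₃ ≠ a₂ := ha₃'.2
  have na41 : a₄ ≠ a₁ := ha₄'.1.1.2
  have na42 : a₄ ≠ a₂ := ha₄'.1.2
  have na43 : a₄ ≠ a₃ := ha₄'.2
  have nb21 : b₂ ≠ b₁ := hb₂'.2
  have ha₂ : a₂ ∈ G.neighborSet v₁ \ (G.neighborSet v₂ ∪ {v}) := ha₂'.1
  have ha₃ : a₃ ∈ G.neighborSet v₁ \ (G.neighborSet v₂ ∪ {v}) := ha₃'.1.1
  have ha₄ : a₄ ∈ G.neighborSet v₁ \ (G.neighborSet v₂ ∪ {v}) := ha₄'.1.1.1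
  have hb₂ : b₂ ∈ G.neighborSet v₂ \ (G.neighborSet v₁ ∪ {v}) := hb₂'.1
  have hAB : ∀ a b, a ∈ G.neighborSet v₁ \ (G.neighborSet v₂ ∪ {v}) →
      b ∈ G.neighborSet v₂ \ (G.neighborSet v₁ ∪ {v}) → a ≠ b := by
    intro a b ha hb h
    subst h
    exact (hmem1 a ha).2.2 (hmem2 a hb).1
  have adv1a1 : G.Adj v₁ a₁ := (hmem1 a₁ ha₁).1
  have adv1a2 : G.Adj v₁ a₂ := (hmem1 a₂ ha₂).1
  have adv1a3 : G.Adj v₁ a₃ := (hmem1 a₃ ha₃).1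
  have adv1a4 : G.Adj v₁ a₄ := (hmem1 a₄ ha₄).1
  have adv2b1 : G.Adj v₂ b₁ := (hmem2 b₁ hb₁).1
  have adv2b2 : G.Adj v₂ b₂ := (hmem2 b₂ hb₂).1
  have adb1a1 : G.Adj b₁ a₁ := (key a₁ b₁ ha₁ hb₁).symm
  have adb1a2 : G.Adj b₁ a₂ := (key a₂ b₁ ha₂ hb₁).symm
  have adb1a3 : G.Adj b₁ a₃ := (key a₃ b₁ ha₃ hb₁).symm
  have adb1a4 : G.Adj b₁ a₄ := (key a₄ b₁ ha₄ hb₁).symm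
  have adb2a1 : G.Adj b₂ a₁ := (key a₁ b₂ ha₁ hb₂).symm
  have adb2a2 : G.Adj b₂ a₂ := (key a₂ b₂ ha₂ hb₂).symm
  have adb2a3 : G.Adj b₂ a₃ := (key a₃ b₂ ha₃ hb₂).symm
  have adb2a4 : G.Adj b₂ a₄ := (key a₄ b₂ ha₄ hb₂).symm
  -- distinctness
  have nab11 : a₁ ≠ b₁ := hAB _ _ ha₁ hb₁
  have nab12 : a₁ ≠ b₂ := hAB _ _ ha₁ hb₂
  have nab21 : a₂ ≠ b₁ := hAB _ _ ha₂ hb₁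
  have nab22 : a₂ ≠ b₂ := hAB _ _ ha₂ hb₂
  have nab31 : a₃ ≠ b₁ := hAB _ _ ha₃ hb₁
  have nab32 : a₃ ≠ b₂ := hAB _ _ ha₃ hb₂
  have nab41 : a₄ ≠ b₁ := hAB _ _ ha₄ hb₁
  have nab42 : a₄ ≠ b₂ := hAB _ _ ha₄ hb₂
  have nv1a1 : v₁ ≠ a₁ := adv1a1.ne
  have nv1a2 : v₁ ≠ a₂ := adv1a2.ne
  have nv1a3 : v₁ ≠ a₃ := adv1a3.ne
  have nv1a4 : v₁ ≠ a₄ := adv1a4.ne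
  have nv1b1 : v₁ ≠ b₁ := fun h => h12 ((h ▸ adv2b1).symm)
  have nv1b2 : v₁ ≠ b₂ := fun h => h12 ((h ▸ adv2b2).symm)
  have nv2a1 : v₂ ≠ a₁ := fun h => h12 (h ▸ adv1a1)
  have nv2a2 : v₂ ≠ a₂ := fun h => h12 (h ▸ adv1a2)
  have nv2a3 : v₂ ≠ a₃ := fun h => h12 (h ▸ adv1a3)
  have nv2a4 : v₂ ≠ a₄ := fun h => h12 (h ▸ adv1a4)
  have nv2b1 : v₂ ≠ b₁ := adv2b1.ne
  have nv2b2 : v₂ ≠ b₂ := adv2b2.ne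
  have nva1 : v ≠ a₁ := ((hmem1 a₁ ha₁).2.1).symm
  have nva2 : v ≠ a₂ := ((hmem1 a₂ ha₂).2.1).symm
  have nva3 : v ≠ a₃ := ((hmem1 a₃ ha₃).2.1).symm
  have nva4 : v ≠ a₄ := ((hmem1 a₄ ha₄).2.1).symm
  have nvb1 : v ≠ b₁ := ((hmem2 b₁ hb₁).2.1).symm
  have nvb2 : v ≠ b₂ := ((hmem2 b₂ hb₂).2.1).symm
  have nvv1 : v ≠ v₁ := hvv₁.ne
  have nvv2 : v ≠ v₂ := hvv₂.ne
  have pairdisj : ∀ x y : V, x ≠ y → Disjoint ({x} : Set V) {y} :=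
    fun x y h => Set.disjoint_singleton.mpr h
  have pd2 : ∀ x : V, x ≠ v → x ≠ v₂ → Disjoint ({x} : Set V) {v, v₂} := by
    intro x h1 h2
    rw [Set.disjoint_singleton_left]
    simp [h1, h2]
  refine ⟨Sum.elim ![({v₁} : Set V), {b₁}, {b₂}] ![({a₁} : Set V), {a₂}, {a₃}, {a₄}, {v, v₂}],
    ?_, ?_, ?_, ?_⟩
  · rintro (i | i) <;> fin_cases i
    exacts [⟨v₁, rfl⟩, ⟨b₁, rfl⟩, ⟨b₂, rfl⟩, ⟨a₁, rfl⟩, ⟨a₂, rfl⟩, ⟨a₃, rfl⟩, ⟨a₄, rfl⟩,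
      ⟨v, Or.inl rfl⟩]
  · rintro (i | i) <;> fin_cases i
    exacts [conn_single G v₁, conn_single G b₁, conn_single G b₂, conn_single G a₁,
      conn_single G a₂, conn_single G a₃, conn_single G a₄, conn_pair hvv₂]
  · intro w₁ w₂ hw
    rcases w₁ with i | i <;> rcases w₂ with j | j <;> fin_cases i <;> fin_cases j <;>
      first
        | exact (hw rfl).elim
        | exact pairdisj _ _ (by first | assumption | (apply Ne.symm; assumption))
        | exact pd2 _ (by first | assumption | (apply Ne.symm; assumption))
            (by first | assumption | (apply Ne.symm; assumption))
        | exact (pd2 _ (by first | assumption | (apply Ne.symm; assumption))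
            (by first | assumption | (apply Ne.symm; assumption))).symm
  · intro w₁ w₂ hadj
    rcases w₁ with i | i <;> rcases w₂ with j | j
    · exact absurd hadj (by simp [completeBipartiteGraph])
    · fin_cases i <;> fin_cases j
      exacts [⟨v₁, rfl, a₁, rfl, adv1a1⟩, ⟨v₁, rfl, a₂, rfl, adv1a2⟩,
        ⟨v₁, rfl, a₃, rfl, adv1a3⟩, ⟨v₁, rfl, a₄, rfl, adv1a4⟩,
        ⟨v₁, rfl, v, Or.inl rfl, hvv₁.symm⟩,
        ⟨b₁, rfl, a₁, rfl, adb1a1⟩, ⟨b₁, rfl, a₂, rfl, adb1a2⟩,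
        ⟨b₁, rfl, a₃, rfl, adb1a3⟩, ⟨b₁, rfl, a₄, rfl, adb1a4⟩,
        ⟨b₁, rfl, v₂, Or.inr rfl, adv2b1.symm⟩,
        ⟨b₂, rfl, a₁, rfl, adb2a1⟩, ⟨b₂, rfl, a₂, rfl, adb2a2⟩,
        ⟨b₂, rfl, a₃, rfl, adb2a3⟩, ⟨b₂, rfl, a₄, rfl, adb2a4⟩,
        ⟨b₂, rfl, v₂, Or.inr rfl, adv2b2.symm⟩]
    · fin_cases i <;> fin_cases j
      exacts [⟨a₁, rfl, v₁, rfl, adv1a1.symm⟩, ⟨a₁, rfl, b₁, rfl, adb1a1.symm⟩,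
        ⟨a₁, rfl, b₂, rfl, adb2a1.symm⟩,
        ⟨a₂, rfl, v₁, rfl, adv1a2.symm⟩, ⟨a₂, rfl, b₁, rfl, adb1a2.symm⟩,
        ⟨a₂, rfl, b₂, rfl, adb2a2.symm⟩,
        ⟨a₃, rfl, v₁, rfl, adv1a3.symm⟩, ⟨a₃, rfl, b₁, rfl, adb1a3.symm⟩,
        ⟨a₃, rfl, b₂, rfl, adb2a3.symm⟩,
        ⟨a₄, rfl, v₁, rfl, adv1a4.symm⟩, ⟨a₄, rfl, b₁, rfl, adb1a4.symm⟩,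
        ⟨a₄, rfl, b₂, rfl, adb2a4.symm⟩,
        ⟨v, Or.inl rfl, v₁, rfl, hvv₁⟩, ⟨v₂, Or.inr rfl, b₁, rfl, adv2b1⟩,
        ⟨v₂, Or.inr rfl, b₂, rfl, adv2b2⟩]
    · exact absurd hadj (by simp [completeBipartiteGraph])
end

section
/- Let G be a triangle-free 3-regular graph of diameter 2, let v be a vertex with neighbors v₁, v₂, v₃, and suppose two vertices u₁, u₂ outside {v,v₁,v₂,v₃} are each adjacent to all of v₁, v₂, v₃. Then G is isomorphic to K_{3,3}. -/
/-- Let `G` be a triangle-free 3-regular graph of diameter 2,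
`v` a vertex with neighbors `v₁, v₂, v₃`, and `u₁, u₂` two further vertices
each adjacent to all of `v₁, v₂, v₃`. Then `G ≅ K_{3,3}`. -/
theorem stmt_14 {V : Type*} [Fintype V] (G : SimpleGraph V)
    (htf : G.CliqueFree 3)
    (hreg : ∀ u : V, (G.neighborSet u).ncard = 3)
    (hdiam : ∀ a b : V, a ≠ b → ¬ G.Adj a b → ∃ w, G.Adj a w ∧ G.Adj w b)
    (v v₁ v₂ v₃ u₁ u₂ : V)
    (hnbr : G.neighborSet v = {v₁, v₂, v₃})
    (hu : u₁ ∉ ({v, v₁, v₂, v₃} : Set V) ∧ u₂ ∉ ({v, v₁, v₂, v₃} : Set V))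
    (hu12 : u₁ ≠ u₂)
    (hadj₁ : G.Adj u₁ v₁ ∧ G.Adj u₁ v₂ ∧ G.Adj u₁ v₃)
    (hadj₂ : G.Adj u₂ v₁ ∧ G.Adj u₂ v₂ ∧ G.Adj u₂ v₃) :
    Nonempty (G ≃g completeBipartiteGraph (Fin 3) (Fin 3)) := by
  classical
  obtain ⟨hu1v, hu1v1, hu1v2, hu1v3⟩ : u₁ ≠ v ∧ u₁ ≠ v₁ ∧ u₁ ≠ v₂ ∧ u₁ ≠ v₃ := by
    have := hu.1; simp [Set.mem_insert_iff, not_or] at this; exact this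
  obtain ⟨hu2v, hu2v1, hu2v2, hu2v3⟩ : u₂ ≠ v ∧ u₂ ≠ v₁ ∧ u₂ ≠ v₂ ∧ u₂ ≠ v₃ := by
    have := hu.2; simp [Set.mem_insert_iff, not_or] at this; exact this
  have hcard : ({v₁, v₂, v₃} : Set V).ncard = 3 := hnbr ▸ hreg v
  have two : ∀ x y : V, ({x, y} : Set V).ncard ≤ 2 :=
    fun x y => le_trans (Set.ncard_insert_le _ _) (by simp)
  have key : ∀ a b c : V, ({a, b, c} : Set V).ncard = 3 → a ≠ b ∧ a ≠ c ∧ b ≠ c := by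
    intro a b c h
    refine ⟨?_, ?_, ?_⟩
    · intro hab; rw [hab] at h
      have he : ({b, b, c} : Set V) = {b, c} := by ext x; simp
      rw [he] at h; have := two b c; omega
    · intro hac; rw [hac] at h
      have he : ({c, b, c} : Set V) = {c, b} := by ext x; simp; tauto
      rw [he] at h; have := two c b; omega
    · intro hbc; rw [hbc] at h
      have he : ({a, c, c} : Set V) = {a, c} := by ext x; simp
      rw [he] at h; have := two a c; omega
  obtain ⟨h12, h13, h23⟩ := key v₁ v₂ v₃ hcard
  -- v is adjacent to each vᵢ
  have hvv1 : G.Adj v v₁ := by rw [← SimpleGraph.mem_neighborSet, hnbr]; simp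
  have hvv2 : G.Adj v v₂ := by rw [← SimpleGraph.mem_neighborSet, hnbr]; simp
  have hvv3 : G.Adj v v₃ := by rw [← SimpleGraph.mem_neighborSet, hnbr]; simp
  have hvv1' := hvv1.ne
  have hvv2' := hvv2.ne
  have hvv3' := hvv3.ne
  -- neighbor sets of u₁, u₂
  have hNu1 : G.neighborSet u₁ = {v₁, v₂, v₃} := by
    refine (Set.eq_of_subset_of_ncard_le ?_ (by rw [hreg u₁, hcard]) (Set.toFinite _)).symm
    rintro x (rfl | rfl | rfl)
    exacts [hadj₁.1, hadj₁.2.1, hadj₁.2.2]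
  have hNu2 : G.neighborSet u₂ = {v₁, v₂, v₃} := by
    refine (Set.eq_of_subset_of_ncard_le ?_ (by rw [hreg u₂, hcard]) (Set.toFinite _)).symm
    rintro x (rfl | rfl | rfl)
    exacts [hadj₂.1, hadj₂.2.1, hadj₂.2.2]
  -- neighbor sets of v₁, v₂, v₃
  have hcard' : ({v, u₁, u₂} : Set V).ncard = 3 :=
    Set.ncard_eq_three.mpr ⟨v, u₁, u₂, (Ne.symm hu1v), (Ne.symm hu2v), hu12, rfl⟩
  have hNv1 : G.neighborSet v₁ = {v, u₁, u₂} := by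
    refine (Set.eq_of_subset_of_ncard_le ?_ (by rw [hreg v₁, hcard']) (Set.toFinite _)).symm
    rintro x (rfl | rfl | rfl)
    exacts [hvv1.symm, hadj₁.1.symm, hadj₂.1.symm]
  have hNv2 : G.neighborSet v₂ = {v, u₁, u₂} := by
    refine (Set.eq_of_subset_of_ncard_le ?_ (by rw [hreg v₂, hcard']) (Set.toFinite _)).symm
    rintro x (rfl | rfl | rfl)
    exacts [hvv2.symm, hadj₁.2.1.symm, hadj₂.2.1.symm]
  have hNv3 : G.neighborSet v₃ = {v, u₁, u₂} := by
    refine (Set.eq_of_subset_of_ncard_le ?_ (by rw [hreg v₃, hcard']) (Set.toFinite _)).symm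
    rintro x (rfl | rfl | rfl)
    exacts [hvv3.symm, hadj₁.2.2.symm, hadj₂.2.2.symm]
  -- every vertex is one of the six
  have hall : ∀ x : V, x = v ∨ x = u₁ ∨ x = u₂ ∨ x = v₁ ∨ x = v₂ ∨ x = v₃ := by
    intro x
    by_contra h
    push_neg at h
    obtain ⟨hxv, hxu1, hxu2, hxv1, hxv2, hxv3⟩ := h
    have hnadj : ¬ G.Adj v x := by
      intro hadj
      have : x ∈ G.neighborSet v := hadj
      rw [hnbr] at this
      rcases this with rfl | rfl | rfl
      exacts [hxv1 rfl, hxv2 rfl, hxv3 rfl]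
    obtain ⟨w, hw1, hw2⟩ := hdiam v x (Ne.symm hxv) hnadj
    have hwmem : w ∈ G.neighborSet v := hw1
    rw [hnbr] at hwmem
    have hx : x ∈ ({v, u₁, u₂} : Set V) := by
      rcases hwmem with rfl | rfl | rfl
      · rw [← hNv1]; exact hw2
      · rw [← hNv2]; exact hw2
      · rw [← hNv3]; exact hw2
    rcases hx with rfl | rfl | rfl
    exacts [hxv rfl, hxu1 rfl, hxu2 rfl]
  -- nonadjacency facts
  have nadj : ∀ a b : V, G.neighborSet a = ({v₁, v₂, v₃} : Set V) →
      b ≠ v₁ → b ≠ v₂ → b ≠ v₃ → ¬ G.Adj a b := by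
    intro a b hN h1 h2 h3 hadj
    have : b ∈ G.neighborSet a := hadj
    rw [hN] at this
    rcases this with rfl | rfl | rfl
    exacts [h1 rfl, h2 rfl, h3 rfl]
  have nadj' : ∀ a b : V, G.neighborSet a = ({v, u₁, u₂} : Set V) →
      b ≠ v → b ≠ u₁ → b ≠ u₂ → ¬ G.Adj a b := by
    intro a b hN h1 h2 h3 hadj
    have : b ∈ G.neighborSet a := hadj
    rw [hN] at this
    rcases this with rfl | rfl | rfl
    exacts [h1 rfl, h2 rfl, h3 rfl]
  have nvu1 : ¬ G.Adj v u₁ := nadj v u₁ hnbr hu1v1 hu1v2 hu1v3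
  have nvu2 : ¬ G.Adj v u₂ := nadj v u₂ hnbr hu2v1 hu2v2 hu2v3
  have nu12 : ¬ G.Adj u₁ u₂ := nadj u₁ u₂ hNu1 hu2v1 hu2v2 hu2v3
  have nv12 : ¬ G.Adj v₁ v₂ := nadj' v₁ v₂ hNv1 (Ne.symm hvv2') (Ne.symm hu1v2) (Ne.symm hu2v2)
  have nv13 : ¬ G.Adj v₁ v₃ := nadj' v₁ v₃ hNv1 (Ne.symm hvv3') (Ne.symm hu1v3) (Ne.symm hu2v3)
  have nv23 : ¬ G.Adj v₂ v₃ := nadj' v₂ v₃ hNv2 (Ne.symm hvv3') (Ne.symm hu1v3) (Ne.symm hu2v3)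
  have nvu1' : ¬ G.Adj u₁ v := fun h => nvu1 h.symm
  have nvu2' : ¬ G.Adj u₂ v := fun h => nvu2 h.symm
  have nu12' : ¬ G.Adj u₂ u₁ := fun h => nu12 h.symm
  have nv12' : ¬ G.Adj v₂ v₁ := fun h => nv12 h.symm
  have nv13' : ¬ G.Adj v₃ v₁ := fun h => nv13 h.symm
  have nv23' : ¬ G.Adj v₃ v₂ := fun h => nv23 h.symm
  -- the map
  set f : V → Fin 3 ⊕ Fin 3 := fun x =>
    if x = v then .inl 0 else if x = u₁ then .inl 1 else if x = u₂ then .inl 2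
    else if x = v₁ then .inr 0 else if x = v₂ then .inr 1 else .inr 2 with hf
  have fv : f v = .inl 0 := by simp [hf]
  have fu1 : f u₁ = .inl 1 := by simp [hf, hu1v]
  have fu2 : f u₂ = .inl 2 := by simp [hf, hu2v, Ne.symm hu12]
  have fv1 : f v₁ = .inr 0 := by simp [hf, Ne.symm hvv1', Ne.symm hu1v1, Ne.symm hu2v1]
  have fv2 : f v₂ = .inr 1 := by
    simp [hf, Ne.symm hvv2', Ne.symm hu1v2, Ne.symm hu2v2, Ne.symm h12]
  have fv3 : f v₃ = .inr 2 := by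
    simp [hf, Ne.symm hvv3', Ne.symm hu1v3, Ne.symm hu2v3, Ne.symm h13, Ne.symm h23]
  let g : Fin 3 ⊕ Fin 3 → V := Sum.elim ![v, u₁, u₂] ![v₁, v₂, v₃]
  have hleft : Function.LeftInverse g f := by
    intro x
    rcases hall x with rfl | rfl | rfl | rfl | rfl | rfl <;>
      simp [g, fv, fu1, fu2, fv1, fv2, fv3]
  have hright : Function.RightInverse g f := by
    rintro (a | a) <;> fin_cases a <;>
      simp [g, fv, fu1, fu2, fv1, fv2, fv3]
  refine ⟨⟨⟨f, g, hleft, hright⟩, ?_⟩⟩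
  intro a b
  simp only [Equiv.coe_fn_mk]
  rcases hall a with rfl | rfl | rfl | rfl | rfl | rfl <;>
    rcases hall b with rfl | rfl | rfl | rfl | rfl | rfl <;>
    simp [fv, fu1, fu2, fv1, fv2, fv3, completeBipartiteGraph,
      hvv1, hvv2, hvv3, hvv1.symm, hvv2.symm, hvv3.symm,
      hadj₁.1, hadj₁.2.1, hadj₁.2.2, hadj₂.1, hadj₂.2.1, hadj₂.2.2,
      hadj₁.1.symm, hadj₁.2.1.symm, hadj₁.2.2.symm,
      hadj₂.1.symm, hadj₂.2.1.symm, hadj₂.2.2.symm,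
      nvu1, nvu2, nu12, nv12, nv13, nv23,
      nvu1', nvu2', nu12', nv12', nv13', nv23']
end
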